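/- Let n ≥ 3 and suppose the enthalpy constant η₀ satisfies η₀ > 2(n−2)²(2n+5)/(3n(n+2)). Then for every ρ ∈ (0,3): 3η₀(n+2) + ρ(6−3n)(6+3n) + 6nρ²(n+1) − n²ρ³ > 0. Consequently Q'(ρ) = 6kρ/(μ(6+3n−ρn)²)·(3η₀(n+2) + ρ(6−3n)(6+3n) + 6nρ²(n+1) − n²ρ³) is strictly positive on (0,3) for any k, μ > 0, so any antiderivative G of Q'(ρ)/(C₁(C₁ρ+C₂)) with C₁(C₁ρ+C₂) > 0 on (0,3) is strictly monotone, hence invertible. -/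

import Mathlib

/-!
Multiplying the cubic by `n` completes it around its critical point `ρ = (n - 2) / n`:
`n · cubic = (3n(n+2) η₀ - 2(n-2)²(2n+5)) + (nρ - (n-2))² (4n + 10 - nρ)`.
The first bracket is positive by the bound on `η₀`, the second term is nonnegative for `ρ < 3`,
so the cubic is positive. The prefactor of `Q'` is positive because `6 + 3n - ρn = 6 + n(3 - ρ)`.
-/

open Set

/-- The cubic factor of `Q'(ρ)` at enthalpy level `η₀` and `n` degrees of freedom. -/
def enthalpyCubic (n η₀ ρ : ℝ) : ℝ :=
  3 * η₀ * (n + 2) + ρ * (6 - 3 * n) * (6 + 3 * n) + 6 * n * ρ ^ 2 * (n + 1) - n ^ 2 * ρ ^ 3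

theorem mul_enthalpyCubic_eq (n η₀ ρ : ℝ) :
    n * enthalpyCubic n η₀ ρ =
      η₀ * (3 * n * (n + 2)) - 2 * (n - 2) ^ 2 * (2 * n + 5)
        + (n * ρ - (n - 2)) ^ 2 * (4 * n + 10 - n * ρ) := by
  unfold enthalpyCubic
  ring

theorem enthalpyCubic_pos {n η₀ ρ : ℝ} (hn : 0 < n)
    (hη : 2 * (n - 2) ^ 2 * (2 * n + 5) < η₀ * (3 * n * (n + 2))) (hρ : ρ < 3) :
    0 < enthalpyCubic n η₀ ρ := by
  have hfactor : 0 < 4 * n + 10 - n * ρ := by nlinarith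
  have hsquare : 0 ≤ (n * ρ - (n - 2)) ^ 2 * (4 * n + 10 - n * ρ) := by positivity
  refine pos_of_mul_pos_right ?_ hn.le
  rw [mul_enthalpyCubic_eq]
  linarith

theorem filtration_prefactor_pos {n k μ ρ : ℝ} (hn : 0 ≤ n) (hk : 0 < k) (hμ : 0 < μ)
    (hρ : ρ ∈ Ioo (0 : ℝ) 3) :
    0 < 6 * k * ρ / (μ * (6 + 3 * n - ρ * n) ^ 2) := by
  have hbase : 0 < 6 + 3 * n - ρ * n := by nlinarith [hρ.2]
  have := hρ.1
  positivity

theorem strictMonoOn_of_hasDerivAt_pos {f f' : ℝ → ℝ} {s : Set ℝ} (hs : IsOpen s)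
    (hconv : Convex ℝ s) (hf : ∀ x ∈ s, HasDerivAt f (f' x) x) (hf' : ∀ x ∈ s, 0 < f' x) :
    StrictMonoOn f s := by
  refine strictMonoOn_of_deriv_pos hconv
    (fun x hx => (hf x hx).continuousAt.continuousWithinAt) fun x hx => ?_
  rw [hs.interior_eq] at hx
  rw [(hf x hx).deriv]
  exact hf' x hx

/-- Isenthalpic van der Waals filtration: if `n ≥ 3` and
`η₀ > 2(n-2)²(2n+5)/(3n(n+2))`, then the cubic
`3η₀(n+2) + ρ(6-3n)(6+3n) + 6nρ²(n+1) - n²ρ³` is positive on `(0,3)`; hence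
`Q'(ρ) = 6kρ/(μ(6+3n-ρn)²)(…) > 0` there, and any antiderivative `G` of
`Q'(ρ)/(C₁(C₁ρ+C₂))` with `C₁(C₁ρ+C₂) > 0` on `(0,3)` is strictly monotone
(hence invertible). -/
theorem vdw_isenthalpic_invertibility
    (n η₀ : ℝ) (hn : 3 ≤ n)
    (hη : η₀ > 2 * (n - 2) ^ 2 * (2 * n + 5) / (3 * n * (n + 2))) :
    (∀ ρ ∈ Set.Ioo (0 : ℝ) 3,
        0 < 3 * η₀ * (n + 2) + ρ * (6 - 3 * n) * (6 + 3 * n)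
              + 6 * n * ρ ^ 2 * (n + 1) - n ^ 2 * ρ ^ 3) ∧
    (∀ k μ : ℝ, 0 < k → 0 < μ →
      (∀ ρ ∈ Set.Ioo (0 : ℝ) 3,
          0 < 6 * k * ρ / (μ * (6 + 3 * n - ρ * n) ^ 2)
                * (3 * η₀ * (n + 2) + ρ * (6 - 3 * n) * (6 + 3 * n)
                    + 6 * n * ρ ^ 2 * (n + 1) - n ^ 2 * ρ ^ 3)) ∧
      (∀ C₁ C₂ : ℝ, (∀ ρ ∈ Set.Ioo (0 : ℝ) 3, 0 < C₁ * (C₁ * ρ + C₂)) →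
        ∀ G : ℝ → ℝ,
          (∀ ρ ∈ Set.Ioo (0 : ℝ) 3,
            HasDerivAt G
              (6 * k * ρ / (μ * (6 + 3 * n - ρ * n) ^ 2)
                  * (3 * η₀ * (n + 2) + ρ * (6 - 3 * n) * (6 + 3 * n)
                      + 6 * n * ρ ^ 2 * (n + 1) - n ^ 2 * ρ ^ 3)
                / (C₁ * (C₁ * ρ + C₂))) ρ) →
          StrictMonoOn G (Set.Ioo (0 : ℝ) 3))) := by
  have hn0 : 0 < n := by linarith
  have hη' : 2 * (n - 2) ^ 2 * (2 * n + 5) < η₀ * (3 * n * (n + 2)) :=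
    (div_lt_iff₀ (by positivity)).mp hη
  have hcubic : ∀ ρ ∈ Ioo (0 : ℝ) 3, 0 < enthalpyCubic n η₀ ρ :=
    fun ρ hρ => enthalpyCubic_pos hn0 hη' hρ.2
  refine ⟨hcubic, fun k μ hk hμ => ?_⟩
  have hQ : ∀ ρ ∈ Ioo (0 : ℝ) 3,
      0 < 6 * k * ρ / (μ * (6 + 3 * n - ρ * n) ^ 2) * enthalpyCubic n η₀ ρ :=
    fun ρ hρ => mul_pos (filtration_prefactor_pos hn0.le hk hμ hρ) (hcubic ρ hρ)
  refine ⟨hQ, fun C₁ C₂ hC G hG => ?_⟩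
  exact strictMonoOn_of_hasDerivAt_pos isOpen_Ioo (convex_Ioo 0 3) hG
    fun ρ hρ => div_pos (hQ ρ hρ) (hC ρ hρ)
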